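/- arXiv:2407.03606 — 6 statements merged into one kernel-verified Lean document; each statement's English description precedes it below -/
import Mathlib

section
/- Let q be a power of a prime p, n = q − 1, and let 1 ≤ k ≤ n. Fix an enumeration α_1, …, α_n of the nonzero elements of F_q. If g and h are two distinct polynomials in F_q[X] of degree at most k − 1 such that both X·g(X) and X·h(X) have zero coefficient at every index divisible by p, then the Hamming distance between the vectors (α_1·g(α_1), …, α_n·g(α_n)) and (α_1·h(α_1), …, α_n·h(α_n)) in F_q^n is at least n − k + 1. In other words, the minimum Hamming distance of the code C = {(α_1·g(α_1), …, α_n·g(α_n)) : g ∈ CF_p(k,q)'} is at least d := n − k + 1. -/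
open Polynomial Finset

/-!
The codewords of `g` and `h` differ from the evaluations of `g` and `h` at the points `α i`
only by the nonzero factors `α i`, which leave the Hamming distance unchanged. Two evaluation
vectors agree exactly at the roots of `g - h` among the `α i`; as `g - h` is a nonzero
polynomial of degree at most `k - 1` and the `α i` are distinct, there are at most `k - 1`
such coordinates, the Reed–Solomon bound.
-/

section

variable {ι R : Type*} [Fintype ι] [CommRing R] [IsDomain R] [DecidableEq R]

theorem Polynomial.card_filter_eval_eq_zero_le_natDegree {f : R[X]} (hf : f ≠ 0) {α : ι → R}
    (hα : Function.Injective α) :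
    #{i | f.eval (α i) = 0} ≤ f.natDegree := by
  calc #{i | f.eval (α i) = 0} = #((univ.filter fun i => f.eval (α i) = 0).image α) :=
        (card_image_of_injective _ hα).symm
    _ ≤ f.natDegree := by
        refine card_le_degree_of_subset_roots fun x hx => ?_
        obtain ⟨i, hi, rfl⟩ := mem_image.mp hx
        exact (mem_roots hf).mpr (mem_filter.mp hi).2

theorem Polynomial.card_sub_natDegree_le_hammingNorm_eval {f : R[X]}
    (hf : f ≠ 0) {α : ι → R} (hα : Function.Injective α) :
    Fintype.card ι - f.natDegree ≤ hammingNorm fun i => f.eval (α i) := by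
  have hsplit := card_filter_add_card_filter_not (s := univ)
    (fun i => f.eval (α i) = 0)
  have hroots := card_filter_eval_eq_zero_le_natDegree hf hα
  rw [card_univ] at hsplit
  rw [hammingNorm]
  simp only [ne_eq]
  omega

theorem Polynomial.sub_le_hammingDist_eval {d : ℕ} {g h : R[X]}
    (hg : g.natDegree ≤ d) (hh : h.natDegree ≤ d) (hgh : g ≠ h) {α : ι → R}
    (hα : Function.Injective α) :
    Fintype.card ι - d ≤ hammingDist (fun i => g.eval (α i)) fun i => h.eval (α i) := by
  have hdeg : (g - h).natDegree ≤ d := (natDegree_sub_le_of_le hg hh).trans (max_self d).le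
  calc Fintype.card ι - d ≤ Fintype.card ι - (g - h).natDegree := by omega
    _ ≤ hammingNorm fun i => (g - h).eval (α i) :=
        card_sub_natDegree_le_hammingNorm_eval (sub_ne_zero.mpr hgh) hα
    _ = hammingDist (fun i => g.eval (α i)) fun i => h.eval (α i) := by
        simp only [hammingNorm, hammingDist, eval_sub, sub_ne_zero]

end

theorem stmt_0_general (n k : ℕ) (hk1 : 1 ≤ k) (hkn : k ≤ n)
    (F : Type) [Field F] [DecidableEq F]
    (α : Fin n → F) (hα : Function.Injective α) (hα0 : ∀ i, α i ≠ 0)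
    (g h : F[X])
    (hgdeg : g.degree ≤ (k - 1 : ℕ)) (hhdeg : h.degree ≤ (k - 1 : ℕ))
    (hgh : g ≠ h) :
    n - k + 1 ≤
      hammingDist (fun i => α i * g.eval (α i)) (fun i => α i * h.eval (α i)) := by
  have hscale : hammingDist (fun i => α i * g.eval (α i)) (fun i => α i * h.eval (α i)) =
      hammingDist (fun i => g.eval (α i)) fun i => h.eval (α i) :=
    hammingDist_comp (fun i => (α i * ·)) fun i => mul_right_injective₀ (hα0 i)
  have hbound := sub_le_hammingDist_eval (natDegree_le_iff_degree_le.mpr hgdeg)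
    (natDegree_le_iff_degree_le.mpr hhdeg) hgh hα
  rw [Fintype.card_fin] at hbound
  omega

/-- The minimum Hamming distance of the code
`C = {(α_1·g(α_1), …, α_n·g(α_n)) : g ∈ CF_p(k,q)'}` is at least `d = n - k + 1`,
stated as: any two distinct message polynomials give codewords at Hamming
distance at least `n - k + 1`. -/
theorem stmt_0 (p e q n k : ℕ) (hp : p.Prime) (he : 0 < e) (hq : q = p ^ e)
    (hn : n = q - 1) (hk1 : 1 ≤ k) (hkn : k ≤ n)
    (F : Type) [Field F] [Fintype F] [DecidableEq F] (hcard : Fintype.card F = q)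
    (α : Fin n → F) (hα : Function.Injective α) (hα0 : ∀ i, α i ≠ 0)
    (g h : F[X])
    (hgdeg : g.degree ≤ (k - 1 : ℕ)) (hhdeg : h.degree ≤ (k - 1 : ℕ))
    (hgz : ∀ j : ℕ, (X * g).coeff (p * j) = 0)
    (hhz : ∀ j : ℕ, (X * h).coeff (p * j) = 0)
    (hgh : g ≠ h) :
    n - k + 1 ≤
      hammingDist (fun i => α i * g.eval (α i)) (fun i => α i * h.eval (α i)) :=
  stmt_0_general n k hk1 hkn F α hα hα0 g h hgdeg hhdeg hgh
end

section
/- Let q be a power of a prime p, n = q − 1, and let 1 ≤ k ≤ n. Fix an enumeration α_1, …, α_n of the nonzero elements of F_q. Then there exists a nonzero polynomial g ∈ CF_p(k,q)' whose codeword (α_1·g(α_1), …, α_n·g(α_n)) has Hamming weight at most n − k + 1 + ⌊k/p⌋. Equivalently, the minimum Hamming distance of the code C = {(α_1·g(α_1), …, α_n·g(α_n)) : g ∈ CF_p(k,q)'} is at most (n − k + 1) + ⌊k/p⌋ (the Singleton bound for a code with q^{k−⌊k/p⌋} codewords). -/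
/-!
The admissible exponents are the `i < k` with `p ∤ i + 1`; there are `k - ⌊k/p⌋` of them.
A nonzero combination of these monomials vanishing at `k - 1 - ⌊k/p⌋` of the points `αᵢ` exists
because there are more unknown coefficients than linear conditions, and its codeword then has
at most `n - (k - 1 - ⌊k/p⌋)` nonzero entries.
-/

open Finset Polynomial

namespace Polynomial

theorem coeff_sum_monomial_subtype {R : Type*} [Semiring R] (s : Finset ℕ) (c : s → R) (n : ℕ) :
    (∑ i : s, monomial (i : ℕ) (c i)).coeff n = if h : n ∈ s then c ⟨n, h⟩ else 0 := by
  rw [finsetSum_coeff]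
  simp only [coeff_monomial]
  split_ifs with h
  · rw [Finset.sum_eq_single ⟨n, h⟩ (fun i _ hi => if_neg fun hin => hi (Subtype.ext hin))
      (fun hn => absurd (mem_univ _) hn), if_pos rfl]
  · exact Finset.sum_eq_zero fun i _ => if_neg fun hi : (i : ℕ) = n => h (hi ▸ i.2)

theorem exists_ne_zero_support_subset_eval_eq_zero {F ι : Type*} [Field F] [Fintype ι]
    (s : Finset ℕ) (x : ι → F) (h : Fintype.card ι < #s) :
    ∃ g : F[X], g ≠ 0 ∧ g.support ⊆ s ∧ ∀ i, g.eval (x i) = 0 := by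
  let Φ : (s → F) →ₗ[F] F[X] := ∑ i : s, (monomial (i : ℕ)).comp (LinearMap.proj i)
  have hΦ : ∀ c n, (Φ c).coeff n = if h : n ∈ s then c ⟨n, h⟩ else 0 := by
    intro c n
    simpa [Φ] using coeff_sum_monomial_subtype s c n
  let E : (s → F) →ₗ[F] ι → F := (LinearMap.pi fun i => leval (x i)).comp Φ
  obtain ⟨c, hc, hc0⟩ := Submodule.exists_mem_ne_zero_of_ne_bot
    (E.ker_ne_bot_of_finrank_lt (by simpa using h))
  obtain ⟨i, hi⟩ := Function.ne_iff.1 hc0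
  refine ⟨Φ c, fun h0 => hi ?_, fun n hn => ?_, fun i => congr_fun hc i⟩
  · simpa [h0] using (hΦ c i).symm
  · by_contra hns
    exact (mem_support_iff.1 hn) (by rw [hΦ, dif_neg hns])

theorem coeff_X_mul_eq_zero_of_dvd {R : Type*} [Semiring R] {p : ℕ} {g : R[X]}
    (hg : ∀ i ∈ g.support, ¬ p ∣ i + 1) {n : ℕ} (hn : p ∣ n) : (X * g).coeff n = 0 := by
  cases n with
  | zero => exact coeff_X_mul_zero g
  | succ i => exact (coeff_X_mul g i).trans (notMem_support_iff.1 fun hi => hg i hi hn)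

end Polynomial

theorem card_filter_not_dvd_succ (k p : ℕ) : #{i ∈ range k | ¬ p ∣ i + 1} = k - k / p := by
  have := card_filter_add_card_filter_not (s := range k) (p ∣ · + 1)
  rw [Nat.card_multiples, card_range] at this
  lia

theorem hammingNorm_le_card_sub_card {ι β : Type*} [Fintype ι] [DecidableEq ι] [Zero β]
    [DecidableEq β] {x : ι → β} {S : Finset ι} (hS : ∀ i ∈ S, x i = 0) : hammingNorm x ≤ Fintype.card ι - #S := by
  rw [← card_compl]
  exact card_le_card fun i hi => mem_compl.2 fun hiS => (mem_filter.1 hi).2 (hS i hiS)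

theorem stmt_1_general (p n k : ℕ) (hp : p.Prime) (hk1 : 1 ≤ k) (hkn : k ≤ n)
    (F : Type) [Field F] [DecidableEq F]
    (α : Fin n → F) :
    ∃ g : F[X], g ≠ 0 ∧ g.degree ≤ (k - 1 : ℕ) ∧
      (∀ j : ℕ, (X * g).coeff (p * j) = 0) ∧
      hammingNorm (fun i => α i * g.eval (α i)) ≤ n - k + 1 + k / p := by
  obtain ⟨S, -, hS⟩ := exists_subset_card_eq (s := (univ : Finset (Fin n))) (n := k - 1 - k / p)
    (by simp only [card_univ, Fintype.card_fin]; lia)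
  have hfree : Fintype.card S < #{i ∈ range k | ¬ p ∣ i + 1} := by
    rw [card_filter_not_dvd_succ, Fintype.card_coe, hS]
    have := Nat.div_lt_self hk1 hp.one_lt
    lia
  obtain ⟨g, hg0, hsupp, hroots⟩ :=
    exists_ne_zero_support_subset_eval_eq_zero _ (fun i : S => α i) hfree
  have hadmissible : ∀ i ∈ g.support, i < k ∧ ¬ p ∣ i + 1 := fun i hi => by
    simpa using hsupp hi
  refine ⟨g, hg0, degree_le_of_natDegree_le ?_, fun j => ?_, ?_⟩
  · have := (hadmissible _ (natDegree_mem_support_of_nonzero hg0)).1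
    lia
  · exact coeff_X_mul_eq_zero_of_dvd (fun i hi => (hadmissible i hi).2) (dvd_mul_right p j)
  · have := hammingNorm_le_card_sub_card (x := fun i => α i * g.eval (α i)) (S := S)
      fun i hi => by simpa using Or.inr (hroots ⟨i, hi⟩)
    rw [Fintype.card_fin, hS] at this
    lia

/-- There exists a nonzero polynomial `g ∈ CF_p(k,q)'` whose codeword
`(α_1·g(α_1), …, α_n·g(α_n))` has Hamming weight at most `n - k + 1 + ⌊k/p⌋`;
equivalently the minimum distance of the code is at most the Singleton bound
for a code with `q^(k - ⌊k/p⌋)` codewords. -/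
theorem stmt_1 (p e q n k : ℕ) (hp : p.Prime) (he : 0 < e) (hq : q = p ^ e)
    (hn : n = q - 1) (hk1 : 1 ≤ k) (hkn : k ≤ n)
    (F : Type) [Field F] [Fintype F] [DecidableEq F] (hcard : Fintype.card F = q)
    (α : Fin n → F) (hα : Function.Injective α) (hα0 : ∀ i, α i ≠ 0) :
    ∃ g : F[X], g ≠ 0 ∧ g.degree ≤ (k - 1 : ℕ) ∧
      (∀ j : ℕ, (X * g).coeff (p * j) = 0) ∧
      hammingNorm (fun i => α i * g.eval (α i)) ≤ n - k + 1 + k / p :=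
  stmt_1_general p n k hp hk1 hkn F α
end

section
/- Let q be a power of a prime p, n = q − 1, and let 2 ≤ k ≤ n with p not dividing k and with k − 1 dividing q − 1. Fix an enumeration α_1, …, α_n of the nonzero elements of F_q. Then the polynomial g(X) = X^{k−1} − 1 belongs to CF_p(k,q)', the equation α^{k−1} = 1 has exactly k − 1 solutions α among the nonzero elements of F_q, and consequently the codeword (α_1·g(α_1), …, α_n·g(α_n)) is nonzero and has Hamming weight exactly n − k + 1. Hence the minimum Hamming distance of the code C = {(α_1·g(α_1), …, α_n·g(α_n)) : g ∈ CF_p(k,q)'} equals n − k + 1. -/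
/-!
`X · (X^(k-1) - 1) = X^k - X` has nonzero coefficients only in degrees `1` and `k`, neither
divisible by `p`. Since every `α i` is nonzero, the codewords of `g` and `h` differ exactly where
`g - h` does not vanish, and a nonzero polynomial of degree `≤ k - 1` has at most `k - 1` roots,
so distinct codewords are at distance `≥ n - k + 1`. For `X^(k-1) - 1` this is attained: as
`k - 1 ∣ q - 1`, the cyclic group `F_q^×` contains exactly `k - 1` roots of `X^(k-1) = 1`.
-/

open Polynomial Finset

theorem FiniteField.card_filter_ne_zero_pow_eq_one {F : Type*} [Field F] [Fintype F]
    [DecidableEq F] {m : ℕ} (hm : 0 < m) (hdvd : m ∣ Fintype.card F - 1) :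
    #{a : F | a ≠ 0 ∧ a ^ m = 1} = m := by
  obtain ⟨g, hg⟩ := IsCyclic.exists_ofOrder_eq_natCard (α := Fˣ)
  rw [Nat.card_eq_fintype_card, Fintype.card_units] at hg
  obtain ⟨c, hc⟩ := hdvd
  have hζ : IsPrimitiveRoot ((g : F) ^ c) m := by
    have hg' : IsPrimitiveRoot (g : F) (Fintype.card F - 1) :=
      IsPrimitiveRoot.coe_units_iff.mpr (hg ▸ IsPrimitiveRoot.orderOf g)
    exact hg'.pow (by have := Fintype.one_lt_card (α := F); omega) (hc.trans (mul_comm m c))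
  have hroots : ({a : F | a ≠ 0 ∧ a ^ m = 1} : Finset F) = nthRootsFinset m (1 : F) := by
    ext a
    simp only [mem_filter, mem_univ, true_and, mem_nthRootsFinset hm]
    exact ⟨And.right, fun ha => ⟨by rintro rfl; simp [hm.ne'] at ha, ha⟩⟩
  rw [hroots, hζ.card_nthRootsFinset]

theorem coeff_X_mul_X_pow_sub_one_of_not_dvd {R : Type*} [Ring R] {p m : ℕ} (hp : p ≠ 1)
    (hpm : ¬ p ∣ m + 1) (j : ℕ) : (X * (X ^ m - 1 : R[X])).coeff (p * j) = 0 := by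
  have hm : p * j ≠ m + 1 := fun h => hpm ⟨j, h.symm⟩
  have h1 : 1 ≠ p * j := fun h => hp (Nat.eq_one_of_mul_eq_one_right h.symm)
  rw [mul_sub, mul_one, ← pow_succ', coeff_sub, coeff_X_pow, coeff_X, if_neg hm, if_neg h1,
    sub_zero]

section Evaluation

variable {ι F : Type*} [Fintype ι] [Field F] [DecidableEq F] {α : ι → F}

theorem hammingNorm_mul_eval (hα0 : ∀ i, α i ≠ 0) (d : F[X]) :
    hammingNorm (fun i => α i * d.eval (α i)) = Fintype.card ι - #{i | d.eval (α i) = 0} := by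
  rw [← card_univ, ← card_filter_add_card_filter_not (s := univ) (fun i => d.eval (α i) = 0),
    Nat.add_sub_cancel_left, hammingNorm]
  congr 1
  exact filter_congr fun i _ => by simp [hα0 i]

theorem card_filter_eval_eq_zero_le_natDegree (hα : Function.Injective α) {d : F[X]}
    (hd : d ≠ 0) : #{i | d.eval (α i) = 0} ≤ d.natDegree := by
  rw [← card_image_of_injective _ hα]
  refine card_le_degree_of_subset_roots fun a ha => ?_
  obtain ⟨i, hi, rfl⟩ := mem_image.mp ha
  exact (mem_roots hd).mpr (mem_filter.mp hi).2

theorem card_sub_le_hammingDist_mul_eval (hα : Function.Injective α) (hα0 : ∀ i, α i ≠ 0)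
    {g h : F[X]} {m : ℕ} (hg : g.degree ≤ m) (hh : h.degree ≤ m) (hgh : g ≠ h) :
    Fintype.card ι - m ≤
      hammingDist (fun i => α i * g.eval (α i)) (fun i => α i * h.eval (α i)) := by
  have hsub : -(fun i => α i * g.eval (α i)) + (fun i => α i * h.eval (α i))
      = fun i => α i * (h - g).eval (α i) := by
    funext i
    simp [mul_sub, neg_add_eq_sub]
  have hdeg : (h - g).natDegree ≤ m :=
    natDegree_le_iff_degree_le.mpr ((degree_sub_le h g).trans (max_le hh hg))
  rw [hammingDist_eq_hammingNorm, hsub, hammingNorm_mul_eval hα0]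
  have := card_filter_eval_eq_zero_le_natDegree hα (sub_ne_zero.mpr hgh.symm)
  omega

theorem card_filter_comp_eq_card_filter_ne_zero [Fintype F] (hα : Function.Injective α)
    (hα0 : ∀ i, α i ≠ 0) (hcard : Fintype.card ι = Fintype.card F - 1)
    (P : F → Prop) [DecidablePred P] : #{i | P (α i)} = #{a | a ≠ 0 ∧ P a} := by
  have himage : univ.image α = ({a | a ≠ 0} : Finset F) := by
    refine eq_of_subset_of_card_le (fun a ha => ?_) ?_
    · obtain ⟨i, -, rfl⟩ := mem_image.mp ha
      simp [hα0 i]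
    · rw [filter_ne', card_erase_of_mem (mem_univ _), card_univ, card_image_of_injective _ hα,
        card_univ, hcard]
  rw [← card_image_of_injective _ hα, ← filter_image, himage, filter_filter]

end Evaluation

theorem stmt_2_general (p q n k : ℕ) (hp : p.Prime)
    (hn : n = q - 1) (hk2 : 2 ≤ k) (hkn : k ≤ n)
    (hpk : ¬ p ∣ k) (hdvd : (k - 1) ∣ (q - 1))
    (F : Type) [Field F] [Fintype F] [DecidableEq F] (hcard : Fintype.card F = q)
    (α : Fin n → F) (hα : Function.Injective α) (hα0 : ∀ i, α i ≠ 0) :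
    ((X ^ (k - 1) - 1 : F[X]).degree ≤ (k - 1 : ℕ) ∧
      ∀ j : ℕ, (X * (X ^ (k - 1) - 1 : F[X])).coeff (p * j) = 0) ∧
    (Finset.univ.filter (fun a : F => a ≠ 0 ∧ a ^ (k - 1) = 1)).card = k - 1 ∧
    (fun i => α i * (X ^ (k - 1) - 1 : F[X]).eval (α i)) ≠ (0 : Fin n → F) ∧
    hammingNorm (fun i => α i * (X ^ (k - 1) - 1 : F[X]).eval (α i)) = n - k + 1 ∧
    (∀ g h : F[X],
      g.degree ≤ (k - 1 : ℕ) → (∀ j : ℕ, (X * g).coeff (p * j) = 0) →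
      h.degree ≤ (k - 1 : ℕ) → (∀ j : ℕ, (X * h).coeff (p * j) = 0) →
      g ≠ h →
      n - k + 1 ≤
        hammingDist (fun i => α i * g.eval (α i)) (fun i => α i * h.eval (α i))) ∧
    (∃ g h : F[X],
      g.degree ≤ (k - 1 : ℕ) ∧ (∀ j : ℕ, (X * g).coeff (p * j) = 0) ∧
      h.degree ≤ (k - 1 : ℕ) ∧ (∀ j : ℕ, (X * h).coeff (p * j) = 0) ∧
      g ≠ h ∧
      hammingDist (fun i => α i * g.eval (α i)) (fun i => α i * h.eval (α i))
        = n - k + 1) := by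
  have hcardn : Fintype.card (Fin n) = Fintype.card F - 1 := by simp [hn, hcard]
  have hdeg : (X ^ (k - 1) - 1 : F[X]).degree ≤ (k - 1 : ℕ) := by compute_degree!
  have hcoeff : ∀ j, (X * (X ^ (k - 1) - 1 : F[X])).coeff (p * j) = 0 :=
    coeff_X_mul_X_pow_sub_one_of_not_dvd hp.ne_one (by rwa [Nat.sub_add_cancel (by omega)])
  have hroots : #{a : F | a ≠ 0 ∧ a ^ (k - 1) = 1} = k - 1 :=
    FiniteField.card_filter_ne_zero_pow_eq_one (by omega) (hcard ▸ hdvd)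
  have hweight :
      hammingNorm (fun i => α i * (X ^ (k - 1) - 1 : F[X]).eval (α i)) = n - k + 1 := by
    rw [hammingNorm_mul_eval hα0]
    simp only [eval_sub, eval_pow, eval_X, eval_one, sub_eq_zero]
    rw [card_filter_comp_eq_card_filter_ne_zero hα hα0 hcardn (· ^ (k - 1) = 1), hroots,
      Fintype.card_fin]
    omega
  have hnonzero : (fun i => α i * (X ^ (k - 1) - 1 : F[X]).eval (α i)) ≠ 0 := by
    rw [← hammingNorm_ne_zero_iff, hweight]
    omega
  refine ⟨⟨hdeg, hcoeff⟩, hroots, hnonzero, hweight, fun g h hg _ hh _ hgh => ?_,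
    X ^ (k - 1) - 1, 0, hdeg, hcoeff, by simp, by simp, fun h0 => hnonzero ?_, ?_⟩
  · have := card_sub_le_hammingDist_mul_eval hα hα0 hg hh hgh
    rw [Fintype.card_fin] at this
    omega
  · simp only [h0, eval_zero, mul_zero]
    rfl
  · rw [← hweight, ← hammingDist_zero_right]
    simp only [eval_zero, mul_zero]
    rfl

/-- If `p ∤ k` and `k - 1 ∣ q - 1`, then `g = X^(k-1) - 1` belongs to
`CF_p(k,q)'`, the equation `α^(k-1) = 1` has exactly `k - 1` solutions among the
nonzero elements of `F_q`, the codeword of `g` is nonzero of Hamming weight exactly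
`n - k + 1`, and hence the minimum Hamming distance of the code equals `n - k + 1`. -/
theorem stmt_2 (p e q n k : ℕ) (hp : p.Prime) (he : 0 < e) (hq : q = p ^ e)
    (hn : n = q - 1) (hk2 : 2 ≤ k) (hkn : k ≤ n)
    (hpk : ¬ p ∣ k) (hdvd : (k - 1) ∣ (q - 1))
    (F : Type) [Field F] [Fintype F] [DecidableEq F] (hcard : Fintype.card F = q)
    (α : Fin n → F) (hα : Function.Injective α) (hα0 : ∀ i, α i ≠ 0) :
    ((X ^ (k - 1) - 1 : F[X]).degree ≤ (k - 1 : ℕ) ∧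
      ∀ j : ℕ, (X * (X ^ (k - 1) - 1 : F[X])).coeff (p * j) = 0) ∧
    (Finset.univ.filter (fun a : F => a ≠ 0 ∧ a ^ (k - 1) = 1)).card = k - 1 ∧
    (fun i => α i * (X ^ (k - 1) - 1 : F[X]).eval (α i)) ≠ (0 : Fin n → F) ∧
    hammingNorm (fun i => α i * (X ^ (k - 1) - 1 : F[X]).eval (α i)) = n - k + 1 ∧
    (∀ g h : F[X],
      g.degree ≤ (k - 1 : ℕ) → (∀ j : ℕ, (X * g).coeff (p * j) = 0) →
      h.degree ≤ (k - 1 : ℕ) → (∀ j : ℕ, (X * h).coeff (p * j) = 0) →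
      g ≠ h →
      n - k + 1 ≤
        hammingDist (fun i => α i * g.eval (α i)) (fun i => α i * h.eval (α i))) ∧
    (∃ g h : F[X],
      g.degree ≤ (k - 1 : ℕ) ∧ (∀ j : ℕ, (X * g).coeff (p * j) = 0) ∧
      h.degree ≤ (k - 1 : ℕ) ∧ (∀ j : ℕ, (X * h).coeff (p * j) = 0) ∧
      g ≠ h ∧
      hammingDist (fun i => α i * g.eval (α i)) (fun i => α i * h.eval (α i))
        = n - k + 1) :=
  stmt_2_general p q n k hp hn hk2 hkn hpk hdvd F hcard α hα hα0
end

section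
/- Let p be a prime, n = p − 1, and 1 ≤ k ≤ n. Fix an enumeration α_1, …, α_n of the nonzero elements of F_p, and let χ : F_p → ℂ be given by χ(x) = exp(2πi·x̃/p), where x̃ ∈ {0, 1, …, p−1} is the canonical integer representative of x. If f and g are two distinct polynomials in CF_p(k,p), then the Hamming distance between the complex vectors (χ(f(α_1)), …, χ(f(α_n))) and (χ(g(α_1)), …, χ(g(α_n))) is at least n − k + 1. -/
/-!
Since `χ` is injective (it is the standard additive character of `ZMod p`), the two codewords
agree exactly where `f` and `g` agree. A point `α i` where they agree is a nonzero root of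
`f - g`, and `0` is a root too because both constant terms vanish; so `f - g ≠ 0`, of degree at
most `k`, has at most `k - 1` such points among the `n` evaluation points.
-/

open Polynomial Finset

namespace Polynomial

variable {R : Type*} [CommRing R] [IsDomain R]

theorem card_lt_natDegree_of_coeff_zero_eq_zero {d : R[X]} (hd : d ≠ 0) (h0 : d.coeff 0 = 0)
    {s : Finset R} (hs0 : 0 ∉ s) (hs : ∀ x ∈ s, d.IsRoot x) : #s < d.natDegree := by
  classical
  have hroots : (insert 0 s).val ⊆ d.roots := by
    intro x hx
    rw [mem_roots hd]
    rcases Finset.mem_insert.mp hx with rfl | hx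
    · simpa [IsRoot, coeff_zero_eq_eval_zero] using h0
    · exact hs x hx
  simpa [card_insert_of_notMem hs0] using card_le_degree_of_subset_roots hroots

theorem card_lt_hammingDist_eval_add_natDegree_sub [DecidableEq R] {ι : Type*} [Fintype ι]
    {α : ι → R} (hα : Function.Injective α) (hα0 : ∀ i, α i ≠ 0) {f g : R[X]} (hfg : f ≠ g)
    (h0 : f.coeff 0 = g.coeff 0) :
    Fintype.card ι <
      hammingDist (fun i => f.eval (α i)) (fun i => g.eval (α i)) + (f - g).natDegree := by
  set agree : Finset ι := {i | f.eval (α i) = g.eval (α i)}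
  have hagree : #agree < (f - g).natDegree := by
    rw [← card_image_of_injective agree hα]
    refine card_lt_natDegree_of_coeff_zero_eq_zero (sub_ne_zero.mpr hfg) (by simp [h0]) ?_ ?_
    · simp [hα0]
    · simp [agree, sub_eq_zero]
  have hsplit : hammingDist (fun i => f.eval (α i)) (fun i => g.eval (α i)) + #agree
      = Fintype.card ι := by
    rw [hammingDist, add_comm, card_filter_add_card_filter_not, card_univ]
  omega

end Polynomial

theorem stmt_5_general (p n k : ℕ) (hp : p.Prime) (hkn : k ≤ n)
    (α : Fin n → ZMod p) (hα : Function.Injective α) (hα0 : ∀ i, α i ≠ 0)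
    (χ : ZMod p → ℂ)
    (hχ : ∀ x : ZMod p,
      χ x = Complex.exp (2 * Real.pi * Complex.I * (x.val : ℂ) / (p : ℂ)))
    (f g : Polynomial (ZMod p))
    (hfdeg : f.degree ≤ (k : ℕ)) (hgdeg : g.degree ≤ (k : ℕ))
    (hfz : ∀ j : ℕ, f.coeff (p * j) = 0) (hgz : ∀ j : ℕ, g.coeff (p * j) = 0)
    (hfg : f ≠ g) :
    n - k + 1 ≤
      hammingDist (fun i => χ (f.eval (α i))) (fun i => χ (g.eval (α i))) := by
  have : Fact p.Prime := ⟨hp⟩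
  have hχ_eq : χ = fun x => (ZMod.stdAddChar x : ℂ) := by
    funext x
    rw [hχ, ZMod.stdAddChar_apply, ZMod.toCircle_apply]
  have hχinj : Function.Injective χ := hχ_eq ▸ ZMod.injective_stdAddChar
  have hdeg : (f - g).natDegree ≤ k :=
    natDegree_le_iff_degree_le.mpr ((degree_sub_le f g).trans (max_le hfdeg hgdeg))
  have h0 : f.coeff 0 = g.coeff 0 := by simpa using (hfz 0).trans (hgz 0).symm
  have hlt := card_lt_hammingDist_eval_add_natDegree_sub hα hα0 hfg h0
  rw [Fintype.card_fin] at hlt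
  rw [hammingDist_comp (fun _ => χ) (fun _ => hχinj)]
  omega

/-- For a prime `p`, `n = p - 1`, `1 ≤ k ≤ n`, and the additive character
`χ(x) = exp(2πi·x̃/p)`, any two distinct polynomials `f, g ∈ CF_p(k,p)` have CP
codewords `(χ(f(α_1)), …, χ(f(α_n)))` at Hamming distance at least `n - k + 1`. -/
theorem stmt_5 (p n k : ℕ) (hp : p.Prime) (hn : n = p - 1) (hk1 : 1 ≤ k) (hkn : k ≤ n)
    (α : Fin n → ZMod p) (hα : Function.Injective α) (hα0 : ∀ i, α i ≠ 0)
    (χ : ZMod p → ℂ)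
    (hχ : ∀ x : ZMod p,
      χ x = Complex.exp (2 * Real.pi * Complex.I * (x.val : ℂ) / (p : ℂ)))
    (f g : Polynomial (ZMod p))
    (hfdeg : f.degree ≤ (k : ℕ)) (hgdeg : g.degree ≤ (k : ℕ))
    (hfz : ∀ j : ℕ, f.coeff (p * j) = 0) (hgz : ∀ j : ℕ, g.coeff (p * j) = 0)
    (hfg : f ≠ g) :
    n - k + 1 ≤
      hammingDist (fun i => χ (f.eval (α i))) (fun i => χ (g.eval (α i))) :=
  stmt_5_general p n k hp hkn α hα hα0 χ hχ f g hfdeg hgdeg hfz hgz hfg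
end

section
/- Let p be a prime, n = p − 1, and 1 ≤ k ≤ n. Fix an enumeration α_1, …, α_n of the nonzero elements of F_p and let χ(x) = exp(2πi·x̃/p). Then the CP code CCP = {(χ(f(α_1)), …, χ(f(α_n))) : f ∈ CF_p(k,p)} has exactly p^k codewords and its minimum Hamming distance equals exactly n − k + 1; that is, CCP is maximum distance separable (it meets the Singleton bound). -/
/-!
Since `χ` is injective, the Hamming distance between two CP codewords is the number of `α i`
at which `f` and `g` differ. The difference `f - g` has degree at most `k` and vanishes at `0`,
which is not among the `α i`, so it vanishes at no more than `k - 1` of them: the distance is at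
least `n - k + 1`. In particular `f ↦ codeword` is injective on `CF_p(k, p)`, whose elements are
the `X * g` with `deg g < k` (because `k < p`), so there are `p ^ k` codewords. The bound is
attained by `X * ∏ i ∈ T, (X - α i)` against `0`, for any `k - 1` indices `T`.
-/

open Polynomial Finset Function

namespace Polynomial

theorem forall_coeff_mul_eq_zero_iff {R : Type*} [Semiring R] {f : R[X]} {p : ℕ}
    (hf : f.natDegree < p) : (∀ j, f.coeff (p * j) = 0) ↔ f.coeff 0 = 0 := by
  refine ⟨fun h => by simpa using h 0, fun h j => ?_⟩
  rcases j.eq_zero_or_pos with rfl | hj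
  · simpa using h
  · exact coeff_eq_zero_of_natDegree_lt (hf.trans_le (Nat.le_mul_of_pos_right p hj))

theorem X_mul_injective {R : Type*} [Semiring R] : Injective (X * · : R[X] → R[X]) :=
  fun f g hfg => ext fun m => by simpa only [coeff_X_mul] using congr_arg (coeff · (m + 1)) hfg

theorem setOf_natDegree_le_coeff_zero_eq_zero {R : Type*} [Semiring R] (k : ℕ) :
    {f : R[X] | f.natDegree ≤ k ∧ f.coeff 0 = 0} = (X * ·) '' (degreeLT R k : Set R[X]) := by
  ext f
  simp only [Set.mem_ofPred_eq, Set.mem_image, SetLike.mem_coe, mem_degreeLT,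
    degree_lt_iff_coeff_zero, natDegree_le_iff_coeff_eq_zero]
  constructor
  · rintro ⟨hf, hf0⟩
    refine ⟨divX f, fun m hm => ?_, ?_⟩
    · rw [coeff_divX]; exact hf _ (by omega)
    · simpa [hf0] using X_mul_divX_add f
  · rintro ⟨g, hg, rfl⟩
    refine ⟨fun m hm => ?_, coeff_X_mul_zero g⟩
    obtain ⟨m, rfl⟩ := Nat.exists_eq_add_one_of_ne_zero (by omega : m ≠ 0)
    rw [coeff_X_mul]; exact hg m (by omega)

theorem card_setOf_natDegree_le_coeff_zero_eq_zero (R : Type*) [Semiring R] (k : ℕ) :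
    Nat.card {f : R[X] | f.natDegree ≤ k ∧ f.coeff 0 = 0} = Nat.card R ^ k := by
  rw [setOf_natDegree_le_coeff_zero_eq_zero, Nat.card_image_of_injective X_mul_injective,
    SetLike.coe_sort_coe, Nat.card_congr (degreeLTEquiv R k).toEquiv, Nat.card_fun,
    Nat.card_fin]

theorem natDegree_X_mul_prod_X_sub_C {R ι : Type*} [CommRing R] [Nontrivial R] (α : ι → R)
    (T : Finset ι) : (X * ∏ j ∈ T, (X - C (α j))).natDegree = #T + 1 := by
  rw [natDegree_X_mul (monic_prod_of_monic _ _ fun j _ => monic_X_sub_C (α j)).ne_zero,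
    natDegree_finsetProd_X_sub_C_eq_card]

variable {R ι β : Type*} [CommRing R] [Fintype ι] [DecidableEq β] {α : ι → R}

theorem card_add_one_le_hammingNorm_eval_add_natDegree [IsDomain R] [DecidableEq R]
    (hα : Injective α) (hα0 : ∀ i, α i ≠ 0) {h : R[X]} (hh : h ≠ 0) (h0 : h.coeff 0 = 0) :
    Fintype.card ι + 1 ≤ hammingNorm (fun i => h.eval (α i)) + h.natDegree := by
  set Z : Finset ι := {i | h.eval (α i) = 0}
  have hroots : (insert 0 (Z.image α)).val ⊆ h.roots := fun x hx => by
    rw [mem_roots hh]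
    rw [Finset.mem_val, Finset.mem_insert, Finset.mem_image] at hx
    rcases hx with rfl | ⟨i, hi, rfl⟩
    · rwa [IsRoot, ← coeff_zero_eq_eval_zero]
    · exact (Finset.mem_filter.1 hi).2
  have h0Z : (0 : R) ∉ Z.image α := by simpa using fun i _ => hα0 i
  have hZ := card_le_degree_of_subset_roots hroots
  rw [card_insert_of_notMem h0Z, card_image_of_injective _ hα] at hZ
  have hsplit : #Z + #{i | ¬h.eval (α i) = 0} = Fintype.card ι :=
    card_filter_add_card_filter_not _
  change Fintype.card ι + 1 ≤ #{i | ¬h.eval (α i) = 0} + h.natDegree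
  omega

theorem card_add_one_le_hammingDist_comp_eval_add [IsDomain R] {χ : R → β} (hχ : Injective χ)
    (hα : Injective α) (hα0 : ∀ i, α i ≠ 0) {f g : R[X]} {k : ℕ} (hf : f.natDegree ≤ k)
    (hg : g.natDegree ≤ k) (h0 : f.coeff 0 = g.coeff 0) (hfg : f ≠ g) :
    Fintype.card ι + 1 ≤
      hammingDist (fun i => χ (f.eval (α i))) (fun i => χ (g.eval (α i))) + k := by
  classical
  have hdeg : (g - f).natDegree ≤ k := (natDegree_sub_le g f).trans (max_le hg hf)
  have := card_add_one_le_hammingNorm_eval_add_natDegree hα hα0 (sub_ne_zero.mpr hfg.symm)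
    (by rw [coeff_sub, h0, sub_self])
  have hsub : -(fun i => f.eval (α i)) + (fun i => g.eval (α i)) = fun i => (g - f).eval (α i) :=
    by ext i; simp only [Pi.add_apply, Pi.neg_apply, eval_sub, neg_add_eq_sub]
  rw [hammingDist_comp (fun _ => χ) (x := fun i => f.eval (α i)) fun _ => hχ,
    hammingDist_eq_hammingNorm, hsub]
  omega

theorem exists_hammingDist_comp_eval_add_le [Nontrivial R] (χ : R → β) (α : ι → R) {k : ℕ}
    (hk1 : 1 ≤ k) (hk : k ≤ Fintype.card ι + 1) :
    ∃ f : R[X], f ≠ 0 ∧ f.natDegree ≤ k ∧ f.coeff 0 = 0 ∧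
      hammingDist (fun i => χ (f.eval (α i))) (fun i => χ ((0 : R[X]).eval (α i))) + k ≤
        Fintype.card ι + 1 := by
  classical
  obtain ⟨T, -, hT⟩ := exists_subset_card_eq (s := (univ : Finset ι)) (n := k - 1)
    (by rw [card_univ]; omega)
  have hdeg := natDegree_X_mul_prod_X_sub_C α T
  refine ⟨X * ∏ j ∈ T, (X - C (α j)), ne_zero_of_natDegree_gt (n := 0) (by omega),
    by omega, coeff_X_mul_zero _, ?_⟩
  have hvanish : ∀ i ∈ T, (X * ∏ j ∈ T, (X - C (α j))).eval (α i) = 0 := fun i hi => by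
    simp only [eval_mul, eval_prod, eval_sub, eval_X, eval_C]
    exact mul_eq_zero_of_right _ (prod_eq_zero hi (sub_self _))
  have hle : hammingDist (fun i => χ ((X * ∏ j ∈ T, (X - C (α j))).eval (α i)))
      (fun i => χ ((0 : R[X]).eval (α i))) ≤ #Tᶜ :=
    card_le_card fun i hi => mem_compl.mpr fun hiT => by
      simp only [Finset.mem_filter, Finset.mem_univ, true_and, hvanish i hiT, eval_zero] at hi
      exact hi rfl
  rw [card_compl, hT] at hle
  omega

theorem card_image_comp_eval_setOf_natDegree_le_coeff_zero_eq_zero [IsDomain R]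
    {χ : R → β} (hχ : Injective χ) (hα : Injective α) (hα0 : ∀ i, α i ≠ 0) {k : ℕ}
    (hk : k ≤ Fintype.card ι) :
    Nat.card ((fun f : R[X] => fun i => χ (f.eval (α i))) ''
      {f | f.natDegree ≤ k ∧ f.coeff 0 = 0}) = Nat.card R ^ k := by
  have hinj : Set.InjOn (fun f : R[X] => fun i => χ (f.eval (α i)))
      {f | f.natDegree ≤ k ∧ f.coeff 0 = 0} := fun f hf g hg hfg => by
    by_contra hne
    have := card_add_one_le_hammingDist_comp_eval_add hχ hα hα0 hf.1 hg.1
      (hf.2.trans hg.2.symm) hne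
    rw [hammingDist_eq_zero.mpr hfg] at this
    omega
  rw [Nat.card_image_of_injOn hinj, card_setOf_natDegree_le_coeff_zero_eq_zero]

end Polynomial

theorem ZMod.injective_cexp_val_div (p : ℕ) [NeZero p] :
    Injective fun x : ZMod p => Complex.exp (2 * Real.pi * Complex.I * x.val / p) := by
  intro x y hxy
  exact ZMod.injective_toCircle <| Circle.coe_injective <| by
    rwa [ZMod.toCircle_apply, ZMod.toCircle_apply]

/-- For a prime `p`, `n = p - 1`, `1 ≤ k ≤ n`, and the additive character
`χ(x) = exp(2πi·x̃/p)`, the CP code `CCP = {(χ(f(α_1)), …, χ(f(α_n))) : f ∈ CF_p(k,p)}`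
has exactly `p^k` codewords and its minimum Hamming distance equals exactly
`n - k + 1` (i.e. it is MDS). -/
theorem stmt_6 (p n k : ℕ) (hp : p.Prime) (hn : n = p - 1) (hk1 : 1 ≤ k) (hkn : k ≤ n)
    (α : Fin n → ZMod p) (hα : Function.Injective α) (hα0 : ∀ i, α i ≠ 0)
    (χ : ZMod p → ℂ)
    (hχ : ∀ x : ZMod p,
      χ x = Complex.exp (2 * Real.pi * Complex.I * (x.val : ℂ) / (p : ℂ))) :
    Nat.card {c : Fin n → ℂ |
        ∃ f : Polynomial (ZMod p), f.degree ≤ (k : ℕ) ∧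
          (∀ j : ℕ, f.coeff (p * j) = 0) ∧ c = fun i => χ (f.eval (α i))}
      = p ^ k ∧
    (∀ f g : Polynomial (ZMod p),
      f.degree ≤ (k : ℕ) → (∀ j : ℕ, f.coeff (p * j) = 0) →
      g.degree ≤ (k : ℕ) → (∀ j : ℕ, g.coeff (p * j) = 0) →
      f ≠ g →
      n - k + 1 ≤
        hammingDist (fun i => χ (f.eval (α i))) (fun i => χ (g.eval (α i)))) ∧
    (∃ f g : Polynomial (ZMod p),
      f.degree ≤ (k : ℕ) ∧ (∀ j : ℕ, f.coeff (p * j) = 0) ∧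
      g.degree ≤ (k : ℕ) ∧ (∀ j : ℕ, g.coeff (p * j) = 0) ∧
      f ≠ g ∧
      hammingDist (fun i => χ (f.eval (α i))) (fun i => χ (g.eval (α i)))
        = n - k + 1) := by
  have : Fact p.Prime := ⟨hp⟩
  have hkp : k < p := by omega
  have hχ_inj : Injective χ := by simpa only [← funext hχ] using ZMod.injective_cexp_val_div p
  have hCF (f : (ZMod p)[X]) :
      (f.degree ≤ k ∧ ∀ j, f.coeff (p * j) = 0) ↔ (f.natDegree ≤ k ∧ f.coeff 0 = 0) := by
    rw [← natDegree_le_iff_degree_le]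
    exact and_congr_right fun hf => forall_coeff_mul_eq_zero_iff (hf.trans_lt hkp)
  have hbound (f g : (ZMod p)[X]) (hf : f.natDegree ≤ k ∧ f.coeff 0 = 0)
      (hg : g.natDegree ≤ k ∧ g.coeff 0 = 0) (hfg : f ≠ g) :
      n + 1 ≤ hammingDist (fun i => χ (f.eval (α i))) (fun i => χ (g.eval (α i))) + k := by
    simpa using card_add_one_le_hammingDist_comp_eval_add hχ_inj hα hα0 hf.1 hg.1
      (hf.2.trans hg.2.symm) hfg
  refine ⟨?_, fun f g hf hf0 hg hg0 hfg => ?_, ?_⟩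
  · have hcode : {c : Fin n → ℂ | ∃ f : (ZMod p)[X], f.degree ≤ (k : ℕ) ∧
          (∀ j : ℕ, f.coeff (p * j) = 0) ∧ c = fun i => χ (f.eval (α i))} =
        (fun f : (ZMod p)[X] => fun i => χ (f.eval (α i))) ''
          {f | f.natDegree ≤ k ∧ f.coeff 0 = 0} :=
      Set.ext fun c => exists_congr fun f => by rw [← and_assoc, hCF, @eq_comm _ c]; rfl
    rw [hcode, card_image_comp_eval_setOf_natDegree_le_coeff_zero_eq_zero hχ_inj hα hα0
      (by rw [Fintype.card_fin]; omega), Nat.card_zmod]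
  · have := hbound f g ((hCF f).1 ⟨hf, hf0⟩) ((hCF g).1 ⟨hg, hg0⟩) hfg
    omega
  · obtain ⟨f, hf0, hfk, hfc, hf_dist⟩ :=
      exists_hammingDist_comp_eval_add_le χ α hk1 (by rw [Fintype.card_fin]; omega)
    obtain ⟨hfd, hfc'⟩ := (hCF f).2 ⟨hfk, hfc⟩
    have := hbound f 0 ⟨hfk, hfc⟩ (by simp) hf0
    refine ⟨f, 0, hfd, hfc', by simp, by simp, hf0, ?_⟩
    rw [Fintype.card_fin] at hf_dist
    omega
end

section
/- Let n ≥ 2 be an integer, θ = n/(n+1), and let k, t be integers with 1 ≤ k ≤ n and 0 < t < n. Let F(t; n, θ) = Σ_{i=0}^{t} C(n,i)·θ^i·(1−θ)^{n−i} be the binomial cumulative distribution function. Then (1−θ)^{−k} · θ^{−(n−k)} · F(t; n, θ) ≤ n^{k+t} / (t^t · (n−t)^{n−t}) ≤ 2^n / n^{n−k−t}. -/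
/-!
Multiplying the binomial CDF at `t` by `s ^ t` with `0 ≤ s ≤ 1` bounds it by the full
binomial sum `(θ s + 1 - θ) ^ n` (the exponential-moment form of the Chernoff bound).
For `θ = n / (n + 1)` the optimal choice `s = t / (n (n - t))` yields the first inequality.
The second one amounts to `n ^ n ≤ 2 ^ n t ^ t (n - t) ^ (n - t)`, i.e. to the binary entropy
of `t / n` being at most `log 2`.
-/

open Finset Real

noncomputable def binomialCDF (n t : ℕ) (θ : ℝ) : ℝ :=
  ∑ i ∈ range (t + 1), (n.choose i : ℝ) * θ ^ i * (1 - θ) ^ (n - i)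

theorem binomialCDF_mul_pow_le {θ s : ℝ} (hθ₀ : 0 ≤ θ) (hθ₁ : θ ≤ 1) (hs₀ : 0 ≤ s)
    (hs₁ : s ≤ 1) {n t : ℕ} (htn : t ≤ n) :
    binomialCDF n t θ * s ^ t ≤ (θ * s + (1 - θ)) ^ n := by
  have h1θ : 0 ≤ 1 - θ := sub_nonneg.mpr hθ₁
  calc binomialCDF n t θ * s ^ t
      ≤ ∑ i ∈ range (t + 1), (n.choose i : ℝ) * θ ^ i * (1 - θ) ^ (n - i) * s ^ i := by
        rw [binomialCDF, sum_mul]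
        refine sum_le_sum fun i hi ↦ mul_le_mul_of_nonneg_left ?_ (by positivity)
        exact pow_le_pow_of_le_one hs₀ hs₁ (Nat.lt_succ_iff.mp (mem_range.mp hi))
    _ ≤ ∑ i ∈ range (n + 1), (n.choose i : ℝ) * θ ^ i * (1 - θ) ^ (n - i) * s ^ i :=
        sum_le_sum_of_subset_of_nonneg (range_subset_range.mpr (by omega))
          (fun _ _ _ ↦ by positivity)
    _ = (θ * s + (1 - θ)) ^ n := by
        rw [add_pow]
        refine sum_congr rfl fun i _ ↦ ?_
        ring

theorem binomialCDF_div_succ_mul_le (n t : ℕ) (htn : t < n) :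
    binomialCDF n t (n / (n + 1)) * t ^ t * ((n : ℝ) - t) ^ (n - t) * (n + 1) ^ n
      ≤ (n : ℝ) ^ (n + t) := by
  have hn : (0 : ℝ) < n := by exact_mod_cast (by omega : 0 < n)
  have hnt : (1 : ℝ) ≤ n - t := by
    have : (t : ℝ) + 1 ≤ n := by exact_mod_cast htn
    linarith
  have hs₁ : (t : ℝ) / (n * (n - t)) ≤ 1 := by
    rw [div_le_one (by positivity)]
    have : (t : ℝ) < n := by exact_mod_cast htn
    nlinarith
  have chernoff := binomialCDF_mul_pow_le (θ := n / (n + 1)) (by positivity)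
    (div_le_one_of_le₀ (by linarith) (by positivity)) (by positivity) hs₁ htn.le
  have hbase : (n : ℝ) / (n + 1) * (t / (n * (n - t))) + (1 - n / (n + 1))
      = n / ((n - t) * (n + 1)) := by
    field_simp; ring
  rw [hbase, div_pow, div_pow, mul_pow, le_div_iff₀ (by positivity)] at chernoff
  have hsplit : ((n : ℝ) - t) ^ n = ((n : ℝ) - t) ^ t * ((n : ℝ) - t) ^ (n - t) := by
    rw [← pow_add, Nat.add_sub_cancel' htn.le]
  calc binomialCDF n t (n / (n + 1)) * t ^ t * ((n : ℝ) - t) ^ (n - t) * (n + 1) ^ n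
      = binomialCDF n t (n / (n + 1)) * (t ^ t / (n ^ t * (n - t) ^ t))
          * ((n - t) * (n + 1)) ^ n * n ^ t := by
        rw [mul_pow, hsplit]; field_simp
    _ ≤ n ^ n * n ^ t := by gcongr
    _ = (n : ℝ) ^ (n + t) := (pow_add _ _ _).symm

theorem add_pow_add_le_two_pow_mul_pow_mul_pow (a b : ℕ) :
    (a + b) ^ (a + b) ≤ 2 ^ (a + b) * a ^ a * b ^ b := by
  rcases Nat.eq_zero_or_pos a with rfl | ha
  · simp [Nat.le_mul_of_pos_left _ (Nat.two_pow_pos b)]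
  rcases Nat.eq_zero_or_pos b with rfl | hb
  · simp [Nat.le_mul_of_pos_left _ (Nat.two_pow_pos a)]
  set n := a + b
  have hn : (0 : ℝ) < n := by positivity
  have hentropy := binEntropy_le_log_two (p := a / n)
  have h1 : 1 - (a : ℝ) / n = b / n := by
    field_simp; push_cast [n]; ring
  rw [binEntropy, h1, inv_div, inv_div] at hentropy
  have key : log (((n : ℝ) / a) ^ a * ((n : ℝ) / b) ^ b) ≤ log (2 ^ n) := by
    rw [log_mul (by positivity) (by positivity), log_pow, log_pow, log_pow]
    have := mul_le_mul_of_nonneg_left hentropy hn.le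
    field_simp at this
    linarith
  rw [log_le_log_iff (by positivity) (by positivity), div_pow, div_pow] at key
  rw [div_mul_div_comm, div_le_iff₀ (by positivity), ← pow_add] at key
  exact_mod_cast (by linarith : ((n : ℝ)) ^ n ≤ 2 ^ n * a ^ a * b ^ b)

theorem stmt_12_general (n k t : ℕ) (hk : k ≤ n)
    (htn : t < n) :
    let θ : ℝ := (n : ℝ) / ((n : ℝ) + 1)
    let Fcdf : ℝ := ∑ i ∈ Finset.range (t + 1),
      (n.choose i : ℝ) * θ ^ i * (1 - θ) ^ (n - i)
    (1 - θ) ^ (-(k : ℤ)) * θ ^ (-((n : ℤ) - (k : ℤ))) * Fcdf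
        ≤ (n : ℝ) ^ (k + t) / ((t : ℝ) ^ t * ((n : ℝ) - (t : ℝ)) ^ (n - t)) ∧
    (n : ℝ) ^ (k + t) / ((t : ℝ) ^ t * ((n : ℝ) - (t : ℝ)) ^ (n - t))
        ≤ (2 : ℝ) ^ n / (n : ℝ) ^ ((n : ℤ) - (k : ℤ) - (t : ℤ)) := by
  intro θ Fcdf
  have hn : (0 : ℝ) < n := by exact_mod_cast (by omega : 0 < n)
  have hden : (0 : ℝ) < t ^ t * ((n : ℝ) - t) ^ (n - t) :=
    mul_pos (by exact_mod_cast Nat.pow_self_pos) (pow_pos (sub_pos.mpr (by exact_mod_cast htn)) _)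
  have hweight : (1 - θ) ^ (-(k : ℤ)) * θ ^ (-((n : ℤ) - (k : ℤ)))
      = ((n : ℝ) + 1) ^ n / (n : ℝ) ^ (n - k) := by
    have h1θ : 1 - θ = ((n : ℝ) + 1)⁻¹ := by simp only [θ]; field_simp; ring
    rw [h1θ, show (n : ℤ) - k = ((n - k : ℕ) : ℤ) by omega, zpow_neg, zpow_neg, inv_zpow,
      inv_inv, zpow_natCast, zpow_natCast, div_pow, inv_div, mul_div_assoc', ← pow_add,
      Nat.add_sub_cancel' hk]
  have hentropy : (n : ℝ) ^ n ≤ 2 ^ n * t ^ t * ((n : ℝ) - t) ^ (n - t) := by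
    have := Nat.cast_le (α := ℝ) |>.mpr (add_pow_add_le_two_pow_mul_pow_mul_pow t (n - t))
    rw [Nat.add_sub_cancel' htn.le] at this
    push_cast [Nat.cast_sub htn.le] at this
    exact this
  have hexp : (n : ℝ) ^ (k + t) * (n : ℝ) ^ ((n : ℤ) - k - t) = (n : ℝ) ^ n := by
    rw [← zpow_natCast, ← zpow_add₀ hn.ne', ← zpow_natCast]
    congr 1
    push_cast
    ring
  constructor
  · rw [hweight, div_mul_eq_mul_div, div_le_div_iff₀ (by positivity) hden]
    calc (n + 1 : ℝ) ^ n * Fcdf * (t ^ t * (n - t) ^ (n - t))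
        = binomialCDF n t θ * t ^ t * ((n : ℝ) - t) ^ (n - t) * (n + 1) ^ n := by
          rw [binomialCDF]; ring
      _ ≤ (n : ℝ) ^ (n + t) := binomialCDF_div_succ_mul_le n t htn
      _ = n ^ (k + t) * n ^ (n - k) := by rw [← pow_add]; congr 1; omega
  · rw [div_le_div_iff₀ hden (by positivity), hexp, ← mul_assoc]
    exact hentropy

/-- For integers `n ≥ 2`, `1 ≤ k ≤ n`, `0 < t < n` and `θ = n/(n+1)`,
with `F(t; n, θ)` the binomial CDF,
`(1-θ)^(-k) · θ^(-(n-k)) · F(t; n, θ) ≤ n^(k+t) / (t^t·(n-t)^(n-t)) ≤ 2^n / n^(n-k-t)`. -/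
theorem stmt_12 (n k t : ℕ) (hn : 2 ≤ n) (hk1 : 1 ≤ k) (hk : k ≤ n)
    (ht0 : 0 < t) (htn : t < n) :
    let θ : ℝ := (n : ℝ) / ((n : ℝ) + 1)
    let Fcdf : ℝ := ∑ i ∈ Finset.range (t + 1),
      (n.choose i : ℝ) * θ ^ i * (1 - θ) ^ (n - i)
    (1 - θ) ^ (-(k : ℤ)) * θ ^ (-((n : ℤ) - (k : ℤ))) * Fcdf
        ≤ (n : ℝ) ^ (k + t) / ((t : ℝ) ^ t * ((n : ℝ) - (t : ℝ)) ^ (n - t)) ∧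
    (n : ℝ) ^ (k + t) / ((t : ℝ) ^ t * ((n : ℝ) - (t : ℝ)) ^ (n - t))
        ≤ (2 : ℝ) ^ n / (n : ℝ) ^ ((n : ℤ) - (k : ℤ) - (t : ℤ)) :=
  stmt_12_general n k t hk htn
end
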